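/- (Result 2, Case 1: correct data-source model, arbitrary covariate model.) For every integrable real-valued measurable function g of (Y, V) and every bounded measurable function k of V (playing the role of a possibly misspecified model for E[g(Y, V) | V]), E[(R/π(V)) · (g(Y, V) − k(V)) + ((1 − R)/(1 − π(V))) · (k(V) − E[g(Y, V) | V, L])] = 0, where π is the true propensity function. -/

import Mathlib

/-!
Ignorability lets the propensity `π(V) = E[R | V]` also serve as `E[R | V, Y, L]`. Every other
factor of the estimating function is measurable with respect to `σ(V, Y, L)`, so `R` and `1 - R`
may be replaced by `π(V)` and `1 - π(V)`. The inverse weights then cancel, the misspecified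
model `k` drops out, and what remains is `E[g(Y, V) - E[g(Y, V) | V, L]] = 0`.
-/

open MeasureTheory ProbabilityTheory MeasurableSpace

section

variable {Ω : Type*} {m m₁ m₂ mΩ : MeasurableSpace Ω} {μ : Measure Ω}

namespace MeasurableSpace

theorem sup_eq_generateFrom_image2_inter (m₁ m₂ : MeasurableSpace Ω) :
    m₁ ⊔ m₂ = generateFrom
      (Set.image2 (· ∩ ·) {s | MeasurableSet[m₁] s} {t | MeasurableSet[m₂] t}) := by
  refine le_antisymm (sup_le ?_ ?_) (generateFrom_le ?_)
  · intro s hs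
    rw [← Set.inter_univ s]
    exact measurableSet_generateFrom ⟨s, hs, Set.univ, .univ, rfl⟩
  · intro t ht
    rw [← Set.univ_inter t]
    exact measurableSet_generateFrom ⟨Set.univ, .univ, t, ht, rfl⟩
  · rintro _ ⟨s, hs, t, ht, rfl⟩
    exact (le_sup_left (b := m₂) s hs).inter (le_sup_right (a := m₁) t ht)

theorem isPiSystem_image2_inter (m₁ m₂ : MeasurableSpace Ω) :
    IsPiSystem (Set.image2 (· ∩ ·) {s | MeasurableSet[m₁] s} {t | MeasurableSet[m₂] t}) := by
  rintro _ ⟨s, hs, t, ht, rfl⟩ _ ⟨s', hs', t', ht', rfl⟩ -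
  exact ⟨s ∩ s', hs.inter hs', t ∩ t', ht.inter ht', Set.inter_inter_inter_comm s s' t t'⟩

end MeasurableSpace

namespace MeasureTheory

theorem setIntegral_eq_of_isPiSystem {E : Type*} [NormedAddCommGroup E] [NormedSpace ℝ E]
    (hm : m ≤ mΩ) {S : Set (Set Ω)} (hgen : m = generateFrom S) (hS : IsPiSystem S)
    {f g : Ω → E} (hf : Integrable f μ) (hg : Integrable g μ)
    (huniv : ∫ ω, f ω ∂μ = ∫ ω, g ω ∂μ)
    (hbasic : ∀ s ∈ S, ∫ ω in s, f ω ∂μ = ∫ ω in s, g ω ∂μ)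
    {t : Set Ω} (ht : MeasurableSet[m] t) : ∫ ω in t, f ω ∂μ = ∫ ω in t, g ω ∂μ := by
  induction t, ht using MeasurableSpace.induction_on_inter hgen hS with
  | empty => simp
  | basic t ht => exact hbasic t ht
  | compl t ht ih =>
    rw [setIntegral_compl (hm t ht) hf, setIntegral_compl (hm t ht) hg, ih, huniv]
  | iUnion s hdisj hs ih =>
    have hs' (i : ℕ) : MeasurableSet (s i) := hm _ (hs i)
    rw [integral_iUnion hs' hdisj hf.integrableOn, integral_iUnion hs' hdisj hg.integrableOn]
    exact tsum_congr ih

theorem Integrable.div_of_le {f p : Ω → ℝ} {δ : ℝ} (hf : Integrable f μ) (hp : AEMeasurable p μ)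
    (hδ : 0 < δ) (hpδ : ∀ᵐ ω ∂μ, δ ≤ p ω) : Integrable (fun ω => f ω / p ω) μ := by
  have hinv : ∀ᵐ ω ∂μ, ‖(p ω)⁻¹‖ ≤ δ⁻¹ := by
    filter_upwards [hpδ] with ω h
    rw [norm_inv, Real.norm_of_nonneg (hδ.le.trans h)]
    exact inv_anti₀ hδ h
  simpa only [div_eq_mul_inv, Pi.inv_apply, mul_comm] using
    hf.bdd_mul hp.inv.aestronglyMeasurable hinv

variable [IsFiniteMeasure μ]

theorem integral_mul_eq_integral_condExp_mul (hm : m ≤ mΩ) {R ψ : Ω → ℝ} {C : ℝ}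
    (hR : AEStronglyMeasurable R μ) (hRC : ∀ᵐ ω ∂μ, |R ω| ≤ C)
    (hψm : StronglyMeasurable[m] ψ) (hψ : Integrable ψ μ) :
    ∫ ω, R ω * ψ ω ∂μ = ∫ ω, μ[R | m] ω * ψ ω ∂μ := calc
  ∫ ω, R ω * ψ ω ∂μ = ∫ ω, μ[R * ψ | m] ω ∂μ := (integral_condExp hm).symm
  _ = ∫ ω, μ[R | m] ω * ψ ω ∂μ := integral_congr_ae <|
    condExp_mul_of_stronglyMeasurable_right hψm (hψ.bdd_mul hR hRC) (.of_bound hR C hRC)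

theorem integral_mul_add_one_sub_mul_of_condExp_ae_eq (hm : m ≤ mΩ) {R p ψ₁ ψ₂ : Ω → ℝ}
    {C : ℝ} (hR : AEStronglyMeasurable R μ) (hRC : ∀ᵐ ω ∂μ, |R ω| ≤ C)
    (hp : μ[R | m] =ᵐ[μ] p) (hψ₁m : StronglyMeasurable[m] ψ₁) (hψ₂m : StronglyMeasurable[m] ψ₂)
    (hψ₁ : Integrable ψ₁ μ) (hψ₂ : Integrable ψ₂ μ) :
    ∫ ω, (R ω * ψ₁ ω + (1 - R ω) * ψ₂ ω) ∂μ = ∫ ω, (p ω * ψ₁ ω + (1 - p ω) * ψ₂ ω) ∂μ := by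
  have hpC : ∀ᵐ ω ∂μ, ‖p ω‖ ≤ C := by
    filter_upwards [ae_bdd_abs_condExp_of_ae_bdd_abs (m := m) hRC, hp] with ω h hω
    rwa [← hω]
  have hpm : AEStronglyMeasurable p μ :=
    (stronglyMeasurable_condExp.mono hm).aestronglyMeasurable.congr hp
  have hd := hψ₁.sub hψ₂
  calc ∫ ω, (R ω * ψ₁ ω + (1 - R ω) * ψ₂ ω) ∂μ
      = ∫ ω, ψ₂ ω ∂μ + ∫ ω, R ω * (ψ₁ - ψ₂) ω ∂μ := by
        rw [← integral_add hψ₂ (hd.bdd_mul hR hRC)]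
        congr with ω
        simp only [Pi.sub_apply]
        ring
    _ = ∫ ω, ψ₂ ω ∂μ + ∫ ω, p ω * (ψ₁ - ψ₂) ω ∂μ := by
        rw [integral_mul_eq_integral_condExp_mul hm hR hRC (hψ₁m.sub hψ₂m) hd]
        exact congrArg _ (integral_congr_ae (hp.mono fun ω hω => by simp only [hω]))
    _ = ∫ ω, (p ω * ψ₁ ω + (1 - p ω) * ψ₂ ω) ∂μ := by
        rw [← integral_add hψ₂ (hd.bdd_mul hpm hpC)]
        congr with ω
        simp only [Pi.sub_apply]
        ring

theorem integral_div_mul_add_one_sub_div_mul_of_condExp_ae_eq (hm : m ≤ mΩ)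
    {R p f k h : Ω → ℝ} {C δ : ℝ} (hR : AEStronglyMeasurable R μ) (hRC : ∀ᵐ ω ∂μ, |R ω| ≤ C)
    (hp : μ[R | m] =ᵐ[μ] p) (hδ : 0 < δ) (hpδ : ∀ᵐ ω ∂μ, δ ≤ p ω ∧ p ω ≤ 1 - δ)
    (hpm : Measurable[m] p) (hfm : Measurable[m] f) (hkm : Measurable[m] k)
    (hhm : Measurable[m] h) (hf : Integrable f μ) (hk : Integrable k μ) (hh : Integrable h μ) :
    ∫ ω, (R ω / p ω * (f ω - k ω) + (1 - R ω) / (1 - p ω) * (k ω - h ω)) ∂μ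
      = ∫ ω, f ω ∂μ - ∫ ω, h ω ∂μ := by
  have hψ₁ : Integrable (fun ω => (f ω - k ω) / p ω) μ :=
    (hf.sub hk).div_of_le (hpm.mono hm le_rfl).aemeasurable hδ (hpδ.mono fun _ hω => hω.1)
  have hψ₂ : Integrable (fun ω => (k ω - h ω) / (1 - p ω)) μ :=
    (hk.sub hh).div_of_le (measurable_const.sub (hpm.mono hm le_rfl)).aemeasurable hδ
      (hpδ.mono fun _ hω => by linarith [hω.2])
  calc _ = ∫ ω, (R ω * ((f ω - k ω) / p ω) + (1 - R ω) * ((k ω - h ω) / (1 - p ω))) ∂μ := by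
        congr with ω
        ring
    _ = ∫ ω, (p ω * ((f ω - k ω) / p ω) + (1 - p ω) * ((k ω - h ω) / (1 - p ω))) ∂μ :=
        integral_mul_add_one_sub_mul_of_condExp_ae_eq hm hR hRC hp
          ((hfm.sub hkm).div hpm).stronglyMeasurable
          ((hkm.sub hhm).div (measurable_const.sub hpm)).stronglyMeasurable hψ₁ hψ₂
    _ = ∫ ω, (f ω - h ω) ∂μ := by
        refine integral_congr_ae ?_
        filter_upwards [hpδ] with ω hω
        have : p ω ≠ 0 := by linarith [hω.1]
        have : 1 - p ω ≠ 0 := by linarith [hω.2]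
        field_simp
        ring
    _ = ∫ ω, f ω ∂μ - ∫ ω, h ω ∂μ := integral_sub hf hh

end MeasureTheory

namespace ProbabilityTheory

theorem condExp_sup_ae_eq_of_condIndep [StandardBorelSpace Ω] [IsFiniteMeasure μ]
    (hm : m ≤ mΩ) (hm₁ : m₁ ≤ mΩ) (hm₂ : m₂ ≤ mΩ) (hind : CondIndep m m₁ m₂ hm μ)
    {s : Set Ω} (hs : MeasurableSet[m₁] s) :
    μ⟦s | m ⊔ m₂⟧ =ᵐ[μ] μ⟦s | m⟧ := by
  have hsup : m ⊔ m₂ ≤ mΩ := sup_le hm hm₂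
  have hs₁ : Integrable (s.indicator fun _ => (1 : ℝ)) μ :=
    (integrable_const 1).indicator (hm₁ s hs)
  refine (ae_eq_condExp_of_forall_setIntegral_eq hsup hs₁
    (fun _ _ _ => integrable_condExp.integrableOn) (fun t ht _ => ?_)
    (stronglyMeasurable_condExp.mono (le_sup_left : m ≤ m ⊔ m₂)).aestronglyMeasurable).symm
  refine setIntegral_eq_of_isPiSystem hsup (sup_eq_generateFrom_image2_inter m m₂)
    (isPiSystem_image2_inter m m₂) integrable_condExp hs₁ (integral_condExp hm) ?_ ht
  rintro _ ⟨a, ha, b, hb, rfl⟩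
  have hb₀ : MeasurableSet b := hm₂ b hb
  have hb₁ : Integrable (b.indicator fun _ => (1 : ℝ)) μ := (integrable_const 1).indicator hb₀
  have hb_le : ∀ᵐ ω ∂μ, ‖b.indicator (fun _ => (1 : ℝ)) ω‖ ≤ 1 :=
    ae_of_all _ fun ω => by by_cases hω : ω ∈ b <;> simp [hω]
  have hbs : Integrable ((b.indicator fun _ => (1 : ℝ)) * μ⟦s | m⟧) μ :=
    integrable_condExp.bdd_mul hb₁.aestronglyMeasurable hb_le
  calc ∫ ω in a ∩ b, (μ⟦s | m⟧) ω ∂μ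
      = ∫ ω in a, ((b.indicator fun _ => (1 : ℝ)) * μ⟦s | m⟧) ω ∂μ := by
        rw [← setIntegral_indicator hb₀]
        congr with ω
        by_cases hω : ω ∈ b <;> simp [hω]
    _ = ∫ ω in a, μ[(b.indicator fun _ => (1 : ℝ)) * μ⟦s | m⟧ | m] ω ∂μ :=
        (setIntegral_condExp hm hbs ha).symm
    _ = ∫ ω in a, (μ⟦s ∩ b | m⟧) ω ∂μ := by
        refine setIntegral_congr_ae (hm a ha) ?_
        filter_upwards [condExp_mul_of_stronglyMeasurable_right stronglyMeasurable_condExp hbs hb₁,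
          (condIndep_iff m m₁ m₂ hm hm₁ hm₂ μ).mp hind s b hs hb] with ω h h' _
        rw [h, h', Pi.mul_apply, Pi.mul_apply, mul_comm]
    _ = ∫ ω in a ∩ b, s.indicator (fun _ => (1 : ℝ)) ω ∂μ := by
        rw [setIntegral_condExp hm ((integrable_const 1).indicator ((hm₁ s hs).inter hb₀)) ha,
          ← setIntegral_indicator hb₀, Set.inter_comm s b, ← Set.indicator_indicator]

theorem condExp_sup_comap_ae_eq_of_condIndepFun [StandardBorelSpace Ω] [IsFiniteMeasure μ]
    {γ : Type*} [mγ : MeasurableSpace γ] (hm : m ≤ mΩ) {R : Ω → ℝ} {W : Ω → γ}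
    (hR : Measurable R) (hW : Measurable W) (hR01 : ∀ ω, R ω = 0 ∨ R ω = 1)
    (hind : CondIndepFun m hm R W μ) :
    μ[R | m ⊔ mγ.comap W] =ᵐ[μ] μ[R | m] := by
  have hR_ind : R = (R ⁻¹' {1}).indicator fun _ => 1 := by
    funext ω
    rcases hR01 ω with h | h <;> simp [h]
  rw [hR_ind]
  exact condExp_sup_ae_eq_of_condIndep hm hR.comap_le hW.comap_le
    ((condIndepFun_iff_condIndep _ _ _ _ _).mp hind) ⟨{1}, measurableSet_singleton 1, rfl⟩

end ProbabilityTheory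

end

theorem dr_estimating_function_unbiased_correct_propensity_general
    {Ω : Type*} {mΩ : MeasurableSpace Ω} [StandardBorelSpace Ω]
    {P : Measure Ω} [IsProbabilityMeasure P]
    {𝒱 𝓛 𝒴 : Type*} [m𝒱 : MeasurableSpace 𝒱] [m𝓛 : MeasurableSpace 𝓛]
    [m𝒴 : MeasurableSpace 𝒴]
    (V : Ω → 𝒱) (L : Ω → 𝓛) (Y : Ω → 𝒴)
    (hV : Measurable V) (hL : Measurable L) (hY : Measurable Y)
    (R : Ω → ℝ) (hR : Measurable R) (hR01 : ∀ ω, R ω = 0 ∨ R ω = 1)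
    (π : 𝒱 → ℝ) (hπ : Measurable π)
    -- `π(V)` is a version of `E[R | σ(V)]`
    (hπV : P[R | MeasurableSpace.comap V m𝒱] =ᵐ[P] fun ω => π (V ω))
    -- positivity
    (δ : ℝ) (hδ0 : 0 < δ)
    (hpos : ∀ᵐ ω ∂P, δ ≤ π (V ω) ∧ π (V ω) ≤ 1 - δ)
    -- ignorability: `R ⟂ (Y, L) | σ(V)`
    (hign : CondIndepFun (MeasurableSpace.comap V m𝒱) (hV.comap_le) R
      (fun ω => (Y ω, L ω)) P)
    (g : 𝒴 × 𝒱 → ℝ) (hg : Measurable g)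
    (hgint : Integrable (fun ω => g (Y ω, V ω)) P)
    (k : 𝒱 → ℝ) (hk : Measurable k) (C : ℝ) (hkbdd : ∀ v, |k v| ≤ C) :
    ∫ ω, ((R ω / π (V ω)) * (g (Y ω, V ω) - k (V ω))
        + ((1 - R ω) / (1 - π (V ω)))
          * (k (V ω)
            - (P[fun ω' => g (Y ω', V ω')
                | MeasurableSpace.comap (fun ω' => (V ω', L ω')) inferInstance]) ω)) ∂P
      = 0 := by
  set G := MeasurableSpace.comap V m𝒱 ⊔ MeasurableSpace.comap (fun ω => (Y ω, L ω)) inferInstance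
  have hG : G ≤ mΩ := sup_le hV.comap_le (hY.prodMk hL).comap_le
  have hVG : Measurable[G] V := (comap_measurable V).mono le_sup_left le_rfl
  have hYLG : Measurable[G] fun ω => (Y ω, L ω) := (comap_measurable _).mono le_sup_right le_rfl
  have hYG : Measurable[G] Y := measurable_fst.comp hYLG
  have hLG : Measurable[G] L := measurable_snd.comp hYLG
  have hRG : P[R | G] =ᵐ[P] fun ω => π (V ω) :=
    (condExp_sup_comap_ae_eq_of_condIndepFun _ hR (hY.prodMk hL) hR01 hign).trans hπV
  have hRC : ∀ᵐ ω ∂P, |R ω| ≤ 1 := ae_of_all _ fun ω => by rcases hR01 ω with h | h <;> simp [h]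
  have hkV : Integrable (fun ω => k (V ω)) P :=
    .of_bound (hk.comp hV).aestronglyMeasurable C (ae_of_all _ fun ω => hkbdd (V ω))
  refine (integral_div_mul_add_one_sub_div_mul_of_condExp_ae_eq hG hR.aestronglyMeasurable hRC
    hRG hδ0 hpos (hπ.comp hVG) (hg.comp (hYG.prodMk hVG)) (hk.comp hVG)
    (stronglyMeasurable_condExp.mono (hVG.prodMk hLG).comap_le).measurable hgint hkV
    integrable_condExp).trans ?_
  rw [integral_condExp (hV.prodMk hL).comap_le]
  exact sub_self _

/-- **Result 2, Case 1.** With the true propensity `π` and an arbitrary bounded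
measurable `k` of `V` (a possibly misspecified model for `E[g(Y,V) | V]`), the DR estimating
function has mean zero:
`E[(R/π(V)) (g(Y,V) − k(V)) + ((1 − R)/(1 − π(V))) (k(V) − E[g(Y,V) | V, L])] = 0`. -/
theorem dr_estimating_function_unbiased_correct_propensity
    {Ω : Type*} {mΩ : MeasurableSpace Ω} [StandardBorelSpace Ω] [Nonempty Ω]
    {P : Measure Ω} [IsProbabilityMeasure P]
    {𝒱 𝓛 𝒴 : Type*} [m𝒱 : MeasurableSpace 𝒱] [m𝓛 : MeasurableSpace 𝓛]
    [m𝒴 : MeasurableSpace 𝒴]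
    (V : Ω → 𝒱) (L : Ω → 𝓛) (Y : Ω → 𝒴)
    (hV : Measurable V) (hL : Measurable L) (hY : Measurable Y)
    (R : Ω → ℝ) (hR : Measurable R) (hR01 : ∀ ω, R ω = 0 ∨ R ω = 1)
    (π : 𝒱 → ℝ) (hπ : Measurable π)
    -- `π(V)` is a version of `E[R | σ(V)]`
    (hπV : P[R | MeasurableSpace.comap V m𝒱] =ᵐ[P] fun ω => π (V ω))
    -- positivity
    (δ : ℝ) (hδ0 : 0 < δ) (hδhalf : δ < 1 / 2)
    (hpos : ∀ᵐ ω ∂P, δ ≤ π (V ω) ∧ π (V ω) ≤ 1 - δ)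
    -- ignorability: `R ⟂ (Y, L) | σ(V)`
    (hign : CondIndepFun (MeasurableSpace.comap V m𝒱) (hV.comap_le) R
      (fun ω => (Y ω, L ω)) P)
    (g : 𝒴 × 𝒱 → ℝ) (hg : Measurable g)
    (hgint : Integrable (fun ω => g (Y ω, V ω)) P)
    (k : 𝒱 → ℝ) (hk : Measurable k) (C : ℝ) (hkbdd : ∀ v, |k v| ≤ C) :
    ∫ ω, ((R ω / π (V ω)) * (g (Y ω, V ω) - k (V ω))
        + ((1 - R ω) / (1 - π (V ω)))
          * (k (V ω)
            - (P[fun ω' => g (Y ω', V ω')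
                | MeasurableSpace.comap (fun ω' => (V ω', L ω')) inferInstance]) ω)) ∂P
      = 0 :=
  dr_estimating_function_unbiased_correct_propensity_general (mΩ := mΩ) (m𝒱 := m𝒱) (m𝓛 := m𝓛)
    (m𝒴 := m𝒴) V L Y hV hL hY R hR hR01 π hπ hπV δ hδ0 hpos hign g hg hgint k hk C hkbdd
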